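/- With the context's notation (in particular {f₁,…,f_s} is a basis of R), the kernel of the substitution homomorphism ψ : K⟦X₁,…,X_s⟧ → K⟦x⟧, Xᵢ ↦ fᵢ, is the ideal of K⟦X₁,…,X_s⟧ generated by G₁,…,G_r, where Gᵢ = Fᵢ − Pᵢ. -/

import Mathlib

set_option synthInstance.maxHeartbeats 1000000
set_option maxHeartbeats 1000000

open PowerSeries

/-- The order of a formal power series: the least `i` such that the coefficient of `x^i`
is nonzero (junk value `0` for the zero series). -/
noncomputable def ord (K : Type*) [Field K] (f : PowerSeries K) : ℕ :=
  sInf {i | coeff i f ≠ 0}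

/-- The set of orders of nonzero elements of a subalgebra `R ⊆ K⟦x⟧`. -/
def oSet (K : Type*) [Field K] (R : Subalgebra K (PowerSeries K)) : Set ℕ :=
  {n | ∃ f ∈ R, f ≠ 0 ∧ ord K f = n}

/-- The quotient `K⟦x⟧/R` has finite length as an `R`-module. -/
def FiniteLengthQuot (K : Type*) [Field K] (R : Subalgebra K (PowerSeries K)) : Prop :=
  IsFiniteLength R (PowerSeries K ⧸ LinearMap.range (Algebra.linearMap R (PowerSeries K)))

/-- The closure of a subalgebra of `K⟦x⟧` in the `x`-adic topology:
`f` belongs to the closure of `S` iff for every `n` there is an element of `S`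
agreeing with `f` on all coefficients up to `n`. -/
def adicClosure {K : Type*} [Field K] (S : Subalgebra K (PowerSeries K)) :
    Subalgebra K (PowerSeries K) where
  carrier := {f | ∀ n : ℕ, ∃ p ∈ S, ∀ i ≤ n, coeff i f = coeff i p}
  add_mem' := by
    intro f g hf hg n
    obtain ⟨p, hpS, hp⟩ := hf n
    obtain ⟨q, hqS, hq⟩ := hg n
    exact ⟨p + q, S.add_mem hpS hqS, fun i hi => by
      simp [map_add, hp i hi, hq i hi]⟩
  mul_mem' := by
    intro f g hf hg n
    obtain ⟨p, hpS, hp⟩ := hf n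
    obtain ⟨q, hqS, hq⟩ := hg n
    refine ⟨p * q, S.mul_mem hpS hqS, fun i hi => ?_⟩
    rw [coeff_mul, coeff_mul]
    refine Finset.sum_congr rfl fun ab hab => ?_
    have h : ab.1 + ab.2 = i := by simpa using hab
    rw [hp ab.1 (by omega), hq ab.2 (by omega)]
  algebraMap_mem' := fun r => fun n => ⟨algebraMap K _ r, S.algebraMap_mem r, fun i _ => rfl⟩

/-- `K⟦f₁,…,f_s⟧`, the subalgebra of `K⟦x⟧` consisting of all power series of the form
`P(f₁,…,f_s)` with `P ∈ K⟦X₁,…,X_s⟧` (for `fᵢ` of positive order), realized as the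
`x`-adic closure of the subalgebra generated by `f₁, …, f_s`; this closure coincides with
the image of the substitution homomorphism `K⟦X₁,…,X_s⟧ → K⟦x⟧`, `Xᵢ ↦ fᵢ`. -/
noncomputable def seriesAlgebra {K : Type*} [Field K] {s : ℕ} (f : Fin s → PowerSeries K) :
    Subalgebra K (PowerSeries K) :=
  adicClosure (Algebra.adjoin K (Set.range f))

/-- The coefficient of `xⁿ` in the substitution `P(f₁,…,f_s)`: when every `fᵢ` has
positive order, only exponents `θ` with all entries `≤ n` contribute, so the defining sum
is finite. -/
noncomputable def substCoeff {K : Type*} [Field K] {s : ℕ} (f : Fin s → PowerSeries K)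
    (P : MvPowerSeries (Fin s) K) (n : ℕ) : K :=
  ∑ θ ∈ Finset.Iic (Finsupp.equivFunOnFinite.symm fun _ : Fin s => n),
    MvPowerSeries.coeff θ P * coeff n (∏ i, f i ^ θ i)

/-- The substitution homomorphism `ψ : K⟦X₁,…,X_s⟧ → K⟦x⟧`, `Xᵢ ↦ fᵢ` (for `fᵢ` of
positive order), `P ↦ P(f₁,…,f_s)`, given coefficientwise. -/
noncomputable def substSeries {K : Type*} [Field K] {s : ℕ} (f : Fin s → PowerSeries K)
    (P : MvPowerSeries (Fin s) K) : PowerSeries K :=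
  PowerSeries.mk (substCoeff f P)

/-!
Give the variable `Xⱼ` the weight `wⱼ = o(fⱼ)`. Since every `fⱼ` is monic of order `wⱼ`, a
monomial `X^θ` is sent by `ψ` to a series of order `weight θ` with leading coefficient `1`.
Hence if `Q` has weighted order `≥ n`, the coefficient of `xⁿ` in `ψ(Q)` is the sum of the
coefficients of the weight-`n` part `Qₙ` of `Q`, which is also the coefficient of `xⁿ` in
`φ(Qₙ)`. So `ψ(Q) = 0` forces `Qₙ ∈ ker φ = (F₁,…,F_r)`, and since the `Fᵢ` are weighted
homogeneous of weight `pᵢ`, `Qₙ = ∑ hᵢ Fᵢ` with `hᵢ` homogeneous of weight `n - pᵢ`. The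
monomials of `Pᵢ` have weight `> pᵢ`, so `Q - ∑ hᵢ Gᵢ` lies in `ker ψ` and has weighted order
`> n`. Iterating, the multipliers produced at step `n` have weighted order `≥ n - pᵢ`, so they
sum coefficientwise, and the sums express `Q` as a combination of the `Gᵢ`. Conversely
`ψ(Gᵢ) = ψ(Fᵢ) - Sᵢ = 0`.
-/

open Finsupp (weight)

theorem Finsupp.weight_mono {σ : Type*} (w : σ → ℕ) : Monotone (weight w : (σ →₀ ℕ) → ℕ) := by
  intro μ θ h
  rw [← tsub_add_cancel_of_le h, map_add]
  exact Nat.le_add_left _ _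

theorem Finsupp.prod_pow_pow_eq_pow_weight {σ M : Type*} [CommMonoid M] (x : M) (w : σ → ℕ)
    (θ : σ →₀ ℕ) : (θ.prod fun i k => (x ^ w i) ^ k) = x ^ weight w θ := by
  simp only [Finsupp.prod, weight_apply, Finsupp.sum, ← pow_mul, Finset.prod_pow_eq_pow_sum,
    smul_eq_mul, mul_comm]

namespace PowerSeries

variable {R : Type*} [CommSemiring R]

theorem exists_eq_X_pow_mul_of_coeff_eq_one {g : R⟦X⟧} {m : ℕ} (hlow : ∀ k < m, coeff k g = 0)
    (hm : coeff m g = 1) : ∃ u, constantCoeff u = 1 ∧ g = X ^ m * u := by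
  obtain ⟨u, rfl⟩ := X_pow_dvd_iff.mpr hlow
  refine ⟨u, ?_, rfl⟩
  rwa [coeff_X_pow_mul', if_pos le_rfl, Nat.sub_self, coeff_zero_eq_constantCoeff_apply] at hm

theorem prod_X_pow_mul_pow {σ : Type*} (w : σ → ℕ) (u : σ → R⟦X⟧) (θ : σ →₀ ℕ) :
    (θ.prod fun i k => (X ^ w i * u i) ^ k) = X ^ weight w θ * θ.prod fun i k => u i ^ k := by
  simp only [mul_pow, Finsupp.prod_mul, Finsupp.prod_pow_pow_eq_pow_weight]

end PowerSeries

namespace MvPolynomial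

variable {σ R : Type*} [CommRing R] {w : σ → ℕ}

@[norm_cast]
theorem coe_sub (p q : MvPolynomial σ R) :
    ((p - q : MvPolynomial σ R) : MvPowerSeries σ R) = p - q :=
  map_sub coeToMvPowerSeries.ringHom p q

theorem aeval_X_pow_monomial (w : σ → ℕ) (θ : σ →₀ ℕ) (c : R) :
    aeval (fun i => (Polynomial.X : Polynomial R) ^ w i) (monomial θ c)
      = Polynomial.C c * Polynomial.X ^ weight w θ := by
  rw [aeval_monomial, Finsupp.prod_pow_pow_eq_pow_weight, Polynomial.algebraMap_eq]

theorem IsWeightedHomogeneous.aeval_X_pow {p : MvPolynomial σ R} {n : ℕ}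
    (hp : p.IsWeightedHomogeneous w n) :
    aeval (fun i => (Polynomial.X : Polynomial R) ^ w i) p
      = Polynomial.C (∑ θ ∈ p.support, p.coeff θ) * Polynomial.X ^ n := by
  conv_lhs => rw [p.as_sum]
  rw [map_sum, map_sum, Finset.sum_mul]
  refine Finset.sum_congr rfl fun θ hθ => ?_
  rw [aeval_X_pow_monomial, hp (mem_support_iff.mp hθ)]

theorem isWeightedHomogeneous_monomial_sub_monomial_of_mem_ker [Nontrivial R] {α β : σ →₀ ℕ}
    (h : monomial α (1 : R) - monomial β 1
      ∈ RingHom.ker (aeval fun i => (Polynomial.X : Polynomial R) ^ w i)) :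
    (monomial α (1 : R) - monomial β 1).IsWeightedHomogeneous w (weight w α) := by
  rw [RingHom.mem_ker, map_sub, sub_eq_zero, aeval_X_pow_monomial, aeval_X_pow_monomial, map_one,
    one_mul, one_mul] at h
  have hαβ : weight w β = weight w α := by simpa using (congrArg Polynomial.natDegree h).symm
  exact (isWeightedHomogeneous_monomial _ _ _ rfl).sub (isWeightedHomogeneous_monomial _ _ _ hαβ)

end MvPolynomial

namespace MvPowerSeries

variable {σ R : Type*} {w : σ → ℕ}

section CommSemiring

variable [CommSemiring R]

theorem IsWeightedHomogeneous.le_weightedOrder {f : MvPowerSeries σ R} {p : ℕ}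
    (hf : f.IsWeightedHomogeneous w p) : (p : ℕ∞) ≤ f.weightedOrder w :=
  nat_le_weightedOrder w fun _ hd => hf.coeff_eq_zero hd.ne

theorem lt_weightedOrder_of_forall_coeff_ne_zero {f : MvPowerSeries σ R} {a : ℕ}
    (h : ∀ θ, coeff θ f ≠ 0 → a < weight w θ) : (a : ℕ∞) < f.weightedOrder w :=
  lt_of_lt_of_le (by exact_mod_cast Nat.lt_succ_self a) <| nat_le_weightedOrder w fun θ hθ =>
    by_contra fun hne => (h θ hne).not_ge (Nat.lt_succ_iff.mp hθ)

theorem le_weightedOrder_sum {ι : Type*} (s : Finset ι) (f : ι → MvPowerSeries σ R) {n : ℕ∞}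
    (h : ∀ i ∈ s, n ≤ (f i).weightedOrder w) : n ≤ (∑ i ∈ s, f i).weightedOrder w :=
  Finset.sum_induction f (fun g => n ≤ g.weightedOrder w)
    (fun _ _ h₁ h₂ => (le_min h₁ h₂).trans (min_weightedOrder_le_add w)) (by simp) h

theorem weightedHomogeneousComponent_mul_of_le {f g : MvPowerSeries σ R} {a n : ℕ}
    (hg : g.IsWeightedHomogeneous w a) (han : a ≤ n) :
    weightedHomogeneousComponent w n (f * g) = weightedHomogeneousComponent w (n - a) f * g := by
  classical
  ext θ
  rw [coeff_weightedHomogeneousComponent]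
  split_ifs with hθ
  · rw [coeff_mul, coeff_mul]
    refine Finset.sum_congr rfl fun x hx => ?_
    by_cases hx₂ : weight w x.2 = a
    · have : weight w x.1 = n - a := by
        rw [← Finset.HasAntidiagonal.mem_antidiagonal.mp hx, map_add] at hθ
        omega
      rw [coeff_weightedHomogeneousComponent, if_pos this]
    · rw [hg.coeff_eq_zero hx₂, mul_zero, mul_zero]
  · have hf : (weightedHomogeneousComponent w (n - a) f).IsWeightedHomogeneous w (n - a) :=
      isWeightedHomogeneous_weightedHomogeneousComponent w f (n - a)
    have hfg : (weightedHomogeneousComponent w (n - a) f * g).IsWeightedHomogeneous w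
        (n - a + a) := hf.mul hg
    rw [Nat.sub_add_cancel han] at hfg
    exact (hfg.coeff_eq_zero hθ).symm

theorem weightedHomogeneousComponent_mul_of_lt {f g : MvPowerSeries σ R} {a n : ℕ}
    (hg : g.IsWeightedHomogeneous w a) (hna : n < a) :
    weightedHomogeneousComponent w n (f * g) = 0 := by
  refine weightedHomogeneousComponent_of_lt_weightedOrder_eq_zero ?_
  calc (n : ℕ∞) < a := by exact_mod_cast hna
    _ ≤ g.weightedOrder w := hg.le_weightedOrder
    _ ≤ f.weightedOrder w + g.weightedOrder w := le_add_self
    _ ≤ (f * g).weightedOrder w := le_weightedOrder_mul w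

theorem exists_weightedHomogeneousComponent_eq_sum_mul {ι : Type*} [Fintype ι]
    {B : ι → MvPowerSeries σ R} {a : ι → ℕ} (hB : ∀ i, (B i).IsWeightedHomogeneous w (a i))
    {F : MvPowerSeries σ R} (hF : F ∈ Ideal.span (Set.range B)) (n : ℕ) :
    ∃ h : ι → MvPowerSeries σ R, (∀ i, (n : ℕ∞) ≤ (h i).weightedOrder w + a i) ∧
      weightedHomogeneousComponent w n F = ∑ i, h i * B i := by
  classical
  obtain ⟨q, rfl⟩ := Ideal.mem_span_range_iff_exists_fun.mp hF
  refine ⟨fun i => if a i ≤ n then weightedHomogeneousComponent w (n - a i) (q i) else 0,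
    fun i => ?_, ?_⟩
  · dsimp only
    split_ifs with hle
    · have hq : (weightedHomogeneousComponent w (n - a i) (q i)).IsWeightedHomogeneous w
          (n - a i) := isWeightedHomogeneous_weightedHomogeneousComponent w _ _
      calc (n : ℕ∞) = ↑(n - a i) + a i := by norm_cast; omega
        _ ≤ _ := by gcongr; exact hq.le_weightedOrder
    · simp
  · rw [map_sum]
    refine Finset.sum_congr rfl fun i _ => ?_
    dsimp only
    split_ifs with hle
    · exact weightedHomogeneousComponent_mul_of_le (hB i) hle
    · rw [zero_mul]
      exact weightedHomogeneousComponent_mul_of_lt (hB i) (not_le.mp hle)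

theorem IsWeightedHomogeneous.exists_coe_eq [Finite σ] (hw : ∀ i, w i ≠ 0)
    {f : MvPowerSeries σ R} {n : ℕ} (hf : f.IsWeightedHomogeneous w n) :
    ∃ p : MvPolynomial σ R, (p : MvPowerSeries σ R) = f := by
  classical
  refine ⟨trunc' R (Finsupp.equivFunOnFinite.symm fun _ => n) f, ?_⟩
  ext θ
  rw [MvPolynomial.coeff_coe, coeff_trunc']
  split_ifs with hθ
  · rfl
  · refine (hf.coeff_eq_zero fun hwθ => hθ fun i => ?_).symm
    simpa [hwθ] using Finsupp.le_weight w (hw i) θ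

theorem coeff_mul_eq_of_forall_le {A B C : MvPowerSeries σ R} {θ : σ →₀ ℕ}
    (h : ∀ μ ≤ θ, coeff μ A = coeff μ B) : coeff θ (A * C) = coeff θ (B * C) := by
  classical
  rw [coeff_mul, coeff_mul]
  refine Finset.sum_congr rfl fun x hx => ?_
  rw [h x.1 (Finset.HasAntidiagonal.mem_antidiagonal.mp hx ▸ le_self_add)]

end CommSemiring

variable [CommRing R]

theorem le_weightedOrder_sub_weightedHomogeneousComponent {f : MvPowerSeries σ R} {n : ℕ}
    (hf : (n : ℕ∞) ≤ f.weightedOrder w) :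
    (n : ℕ∞) + 1 ≤ (f - weightedHomogeneousComponent w n f).weightedOrder w := by
  refine le_weightedOrder w fun θ hθ => ?_
  rw [map_sub, coeff_weightedHomogeneousComponent]
  split_ifs with h
  · exact sub_self _
  · rw [sub_zero]
    refine coeff_eq_zero_of_lt_weightedOrder w (lt_of_lt_of_le ?_ hf)
    have : weight w θ < n + 1 := by exact_mod_cast hθ
    exact_mod_cast (Nat.lt_succ_iff.mp this).lt_of_ne h

theorem mem_span_of_le_weightedOrder_sub_sum_mul {ι : Type*} [Fintype ι]
    (G : ι → MvPowerSeries σ R) (c : ι → ℕ) (h : ℕ → ι → MvPowerSeries σ R)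
    (hh : ∀ (m : ℕ) i, (m : ℕ∞) ≤ (h m i).weightedOrder w + c i) {Q : MvPowerSeries σ R}
    (hQ : ∀ N : ℕ,
      (N : ℕ∞) ≤ (Q - ∑ i, (∑ m ∈ Finset.range N, h m i) * G i).weightedOrder w) :
    Q ∈ Ideal.span (Set.range G) := by
  have hvanish : ∀ m i μ, weight w μ + c i < m → coeff μ (h m i) = 0 := by
    intro m i μ hm
    refine coeff_eq_zero_of_lt_weightedOrder w ?_
    by_contra! hle
    have := (hh m i).trans (by gcongr : _ ≤ (weight w μ : ℕ∞) + c i)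
    norm_cast at this
    omega
  -- `H i` is the coefficientwise sum `∑ₘ h m i`: at `μ` only the terms with
  -- `m ≤ weight μ + c i` are nonzero
  let H : ι → MvPowerSeries σ R := fun i μ =>
    ∑ m ∈ Finset.range (weight w μ + c i + 1), coeff μ (h m i)
  have hH : ∀ i μ N, weight w μ + c i < N →
      coeff μ (H i) = coeff μ (∑ m ∈ Finset.range N, h m i) := by
    intro i μ N hN
    rw [map_sum]
    exact Finset.sum_subset (Finset.range_subset_range.mpr hN)
      fun m _ hm => hvanish m i μ (by simpa using hm)
  suffices Q = ∑ i, H i * G i by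
    rw [this]
    exact Ideal.sum_mem _ fun i _ => Ideal.mul_mem_left _ _ (Ideal.subset_span ⟨i, rfl⟩)
  ext θ
  set N := weight w θ + ∑ i, c i + 1
  have hθ := coeff_eq_zero_of_lt_weightedOrder w
    (lt_of_lt_of_le (by exact_mod_cast (by omega : weight w θ < N)) (hQ N))
  rw [map_sub, sub_eq_zero] at hθ
  rw [hθ, map_sum, map_sum]
  refine Finset.sum_congr rfl fun i _ => coeff_mul_eq_of_forall_le fun μ hμ => (hH i μ N ?_).symm
  have := Finset.single_le_sum (fun j _ => Nat.zero_le (c j)) (Finset.mem_univ i)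
  have := Finsupp.weight_mono w hμ
  omega

theorem le_span_of_forall_exists_le_weightedOrder_sub_sum_mul {ι : Type*} [Fintype ι]
    {G : ι → MvPowerSeries σ R} (c : ι → ℕ) {I : Ideal (MvPowerSeries σ R)} (hG : ∀ i, G i ∈ I)
    (happrox : ∀ Q ∈ I, ∀ n : ℕ, (n : ℕ∞) ≤ Q.weightedOrder w →
      ∃ h : ι → MvPowerSeries σ R, (∀ i, (n : ℕ∞) ≤ (h i).weightedOrder w + c i) ∧
        (n : ℕ∞) + 1 ≤ (Q - ∑ i, h i * G i).weightedOrder w) :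
    I ≤ Ideal.span (Set.range G) := by
  choose! h hh using happrox
  intro Q hQ
  let T : ℕ → MvPowerSeries σ R := fun n => Nat.rec Q (fun m T => T - ∑ i, h T m i * G i) n
  have hT : ∀ n, T n ∈ I ∧ (n : ℕ∞) ≤ (T n).weightedOrder w := by
    intro n
    induction n with
    | zero => exact ⟨hQ, by simp⟩
    | succ n ih =>
      refine ⟨I.sub_mem ih.1 (I.sum_mem fun i _ => I.mul_mem_left _ (hG i)), ?_⟩
      exact_mod_cast (hh _ ih.1 n ih.2).2
  have hT_eq : ∀ N, T N = Q - ∑ i, (∑ m ∈ Finset.range N, h (T m) m i) * G i := by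
    intro N
    induction N with
    | zero => simp [T]
    | succ N ih =>
      simp only [Finset.sum_range_succ, add_mul, Finset.sum_add_distrib, ← sub_sub, ← ih]
      rfl
  exact mem_span_of_le_weightedOrder_sub_sum_mul G c (fun m i => h (T m) m i)
    (fun (m : ℕ) i => (hh _ (hT m).1 m (hT m).2).1 i) fun N => hT_eq N ▸ (hT N).2

section Subst

variable [Finite σ] (hw : ∀ i, w i ≠ 0) {u : σ → PowerSeries R}
  (hu : ∀ i, PowerSeries.constantCoeff (u i) = 1)
include hw

theorem hasSubst_X_pow_mul (u : σ → PowerSeries R) :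
    HasSubst fun i => PowerSeries.X ^ w i * u i :=
  hasSubst_of_constantCoeff_zero fun i => by
    change PowerSeries.constantCoeff (PowerSeries.X ^ w i * u i) = 0
    simp [hw i]

include hu

theorem coeff_subst_X_pow_mul {Q : MvPowerSeries σ R} {n : ℕ}
    (hQ : (n : ℕ∞) ≤ Q.weightedOrder w) :
    PowerSeries.coeff n (subst (fun i => PowerSeries.X ^ w i * u i) Q)
      = ∑ᶠ θ, coeff θ (weightedHomogeneousComponent w n Q) := by
  rw [← PowerSeries.coeff_coeToMvPowerSeries, coeff_subst (hasSubst_X_pow_mul hw u)]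
  refine finsum_congr fun θ => ?_
  rw [PowerSeries.coeff_coeToMvPowerSeries, PowerSeries.prod_X_pow_mul_pow,
    PowerSeries.coeff_X_pow_mul', coeff_weightedHomogeneousComponent, smul_eq_mul]
  rcases lt_trichotomy (weight w θ) n with hlt | rfl | hgt
  · rw [coeff_eq_zero_of_lt_weightedOrder w (lt_of_lt_of_le (by exact_mod_cast hlt) hQ),
      zero_mul, if_neg hlt.ne]
  · rw [if_pos le_rfl, if_pos rfl, Nat.sub_self, PowerSeries.coeff_zero_eq_constantCoeff_apply,
      map_finsuppProd]
    simp [hu]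
  · rw [if_neg (not_le.mpr hgt), if_neg hgt.ne', mul_zero]

theorem exists_coe_eq_weightedHomogeneousComponent_mem_ker {Q : MvPowerSeries σ R}
    (hQ : subst (fun i => PowerSeries.X ^ w i * u i) Q = 0) {n : ℕ}
    (hn : (n : ℕ∞) ≤ Q.weightedOrder w) :
    ∃ p : MvPolynomial σ R, (p : MvPowerSeries σ R) = weightedHomogeneousComponent w n Q ∧
      p ∈ RingHom.ker (MvPolynomial.aeval fun i => (Polynomial.X : Polynomial R) ^ w i) := by
  have hQn : (weightedHomogeneousComponent w n Q).IsWeightedHomogeneous w n :=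
    isWeightedHomogeneous_weightedHomogeneousComponent w Q n
  obtain ⟨p, hp⟩ := hQn.exists_coe_eq hw
  have hp_hom : p.IsWeightedHomogeneous w n := fun θ hθ => by
    rw [← MvPolynomial.coeff_coe, hp] at hθ
    exact hQn hθ
  have hcoeff := coeff_subst_X_pow_mul hw hu hn
  rw [hQ, map_zero, ← hp, finsum_eq_sum_of_support_subset _ (s := p.support)
    fun θ hθ => by simpa using hθ] at hcoeff
  simp only [MvPolynomial.coeff_coe] at hcoeff
  exact ⟨p, hp, by rw [RingHom.mem_ker, hp_hom.aeval_X_pow, ← hcoeff, map_zero, zero_mul]⟩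

variable {ι : Type*} [Fintype ι] {B : ι → MvPolynomial σ R} {a : ι → ℕ}
  (hB : ∀ i, (B i).IsWeightedHomogeneous w (a i))
  (hker : RingHom.ker (MvPolynomial.aeval fun i => (Polynomial.X : Polynomial R) ^ w i)
    ≤ Ideal.span (Set.range B))
  {P : ι → MvPowerSeries σ R} (hP : ∀ i, (a i : ℕ∞) < (P i).weightedOrder w)
include hB hker hP

theorem exists_le_weightedOrder_sub_sum_mul {Q : MvPowerSeries σ R}
    (hQ : subst (fun i => PowerSeries.X ^ w i * u i) Q = 0) {n : ℕ}
    (hn : (n : ℕ∞) ≤ Q.weightedOrder w) :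
    ∃ h : ι → MvPowerSeries σ R, (∀ i, (n : ℕ∞) ≤ (h i).weightedOrder w + a i) ∧
      (n : ℕ∞) + 1 ≤ (Q - ∑ i, h i * ((B i : MvPowerSeries σ R) - P i)).weightedOrder w := by
  obtain ⟨p, hp, hp_ker⟩ := exists_coe_eq_weightedHomogeneousComponent_mem_ker hw hu hQ hn
  have hp_span : (p : MvPowerSeries σ R)
      ∈ Ideal.span (Set.range fun i => (B i : MvPowerSeries σ R)) := by
    have := Ideal.mem_map_of_mem MvPolynomial.coeToMvPowerSeries.ringHom (hker hp_ker)
    rwa [Ideal.map_span, ← Set.range_comp] at this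
  have hB' : ∀ i, (B i : MvPowerSeries σ R).IsWeightedHomogeneous w (a i) := hB
  obtain ⟨h, hh, hh_eq⟩ := exists_weightedHomogeneousComponent_eq_sum_mul hB' hp_span n
  rw [hp, ← isWeightedHomogeneous_iff_eq_weightedHomogeneousComponent.mp
    (isWeightedHomogeneous_weightedHomogeneousComponent w Q n)] at hh_eq
  refine ⟨h, hh, ?_⟩
  have hsplit : Q - ∑ i, h i * ((B i : MvPowerSeries σ R) - P i)
      = (Q - weightedHomogeneousComponent w n Q) + ∑ i, h i * P i := by
    simp only [mul_sub, Finset.sum_sub_distrib, hh_eq]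
    ring
  rw [hsplit]
  refine (le_min (le_weightedOrder_sub_weightedHomogeneousComponent hn)
    (le_weightedOrder_sum _ _ fun i _ => ?_)).trans (min_weightedOrder_le_add w)
  calc (n : ℕ∞) + 1 ≤ (h i).weightedOrder w + a i + 1 := by gcongr; exact hh i
    _ ≤ (h i).weightedOrder w + (P i).weightedOrder w := by
      rw [add_assoc]
      gcongr
      exact Order.add_one_le_of_lt (hP i)
    _ ≤ _ := le_weightedOrder_mul w

theorem setOf_subst_eq_zero_eq_span
    (hPB : ∀ i, subst (fun i => PowerSeries.X ^ w i * u i) (P i)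
      = subst (fun i => PowerSeries.X ^ w i * u i) (B i : MvPowerSeries σ R)) :
    {Q | subst (fun i => PowerSeries.X ^ w i * u i) Q = 0}
      = (Ideal.span (Set.range fun i => (B i : MvPowerSeries σ R) - P i) :
          Set (MvPowerSeries σ R)) := by
  have hsubst := hasSubst_X_pow_mul hw u
  have hG : ∀ i, (B i : MvPowerSeries σ R) - P i ∈ RingHom.ker (substAlgHom (R := R) hsubst) :=
    fun i => by rw [RingHom.mem_ker, substAlgHom_apply, subst_sub hsubst, hPB i, sub_self]
  have hker_subst : RingHom.ker (substAlgHom (R := R) hsubst) = Ideal.span _ :=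
    le_antisymm
      (le_span_of_forall_exists_le_weightedOrder_sub_sum_mul a hG fun Q hQ _ hn =>
        exists_le_weightedOrder_sub_sum_mul hw hu hB hker hP (by simpa using hQ) hn)
      (Ideal.span_le.mpr (Set.range_subset_iff.mpr hG))
  ext Q
  simp [← hker_subst]

end Subst

end MvPowerSeries

theorem exists_eq_X_pow_ord_mul {K : Type*} [Field K] {g : PowerSeries K}
    (hg : coeff (ord K g) g = 1) : ∃ u, constantCoeff u = 1 ∧ g = X ^ ord K g * u :=
  exists_eq_X_pow_mul_of_coeff_eq_one (fun _ hk => not_not.mp (Nat.notMem_of_lt_sInf hk)) hg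

theorem substSeries_eq_subst {K : Type*} [Field K] {s : ℕ} {f : Fin s → PowerSeries K}
    (hf : ∀ i, PowerSeries.constantCoeff (f i) = 0) : substSeries f = MvPowerSeries.subst f := by
  funext P
  ext n
  rw [substSeries, coeff_mk, substCoeff, ← coeff_coeToMvPowerSeries,
    MvPowerSeries.coeff_subst (MvPowerSeries.hasSubst_of_constantCoeff_zero hf),
    finsum_eq_sum_of_support_subset _ ?_]
  · refine Finset.sum_congr rfl fun θ _ => ?_
    rw [Finsupp.prod_fintype _ _ fun _ => pow_zero _, smul_eq_mul]
    rfl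
  · intro θ hθ
    rw [Finset.coe_Iic, Set.mem_Iic]
    by_contra hle
    obtain ⟨i, hi⟩ : ∃ i, n < θ i := by simpa [Finsupp.le_def] using hle
    have hdvd : X ^ θ i ∣ θ.prod fun j e => f j ^ e :=
      (pow_dvd_pow_of_dvd (X_dvd_iff.mpr (hf i)) _).trans
        (Finset.dvd_prod_of_mem _ (Finsupp.mem_support_iff.mpr (Nat.ne_zero_of_lt hi)))
    exact hθ (by simp only [coeff_coeToMvPowerSeries, X_pow_dvd_iff.mp hdvd n hi, smul_zero])

theorem stmt_10_general (K : Type*) [Field K] {s r : ℕ} (f : Fin s → PowerSeries K)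
    (hford : ∀ i, 0 < ord K (f i))
    (hmonic : ∀ i, coeff (ord K (f i)) (f i) = 1)
    (α β : Fin r → (Fin s →₀ ℕ))
    (hker : RingHom.ker (MvPolynomial.aeval fun i => (Polynomial.X : Polynomial K) ^ ord K (f i))
      = Ideal.span (Set.range fun i =>
          (MvPolynomial.monomial (α i) (1 : K) - MvPolynomial.monomial (β i) (1 : K))))
    (P : Fin r → MvPowerSeries (Fin s) K)
    (hP : ∀ i, substSeries f (P i) = (∏ j, f j ^ (α i) j) - (∏ j, f j ^ (β i) j))
    (hPweight : ∀ i, ∀ θ : Fin s →₀ ℕ, MvPowerSeries.coeff θ (P i) ≠ 0 →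
      (∑ j, (α i) j * ord K (f j)) < ∑ j, θ j * ord K (f j)) :
    {Q : MvPowerSeries (Fin s) K | substSeries f Q = 0}
      = ↑(Ideal.span (Set.range fun i =>
          ((MvPowerSeries.monomial (α i)) (1 : K)
            - (MvPowerSeries.monomial (β i)) (1 : K) - P i))) := by
  set w : Fin s → ℕ := fun i => ord K (f i)
  have hw : ∀ i, w i ≠ 0 := fun i => (hford i).ne'
  choose u hu hfu using fun i => exists_eq_X_pow_ord_mul (hmonic i)
  have hf : f = fun i => X ^ w i * u i := funext hfu
  have hsubst : MvPowerSeries.HasSubst f := hf ▸ MvPowerSeries.hasSubst_X_pow_mul hw u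
  have hψ : substSeries f = MvPowerSeries.subst f :=
    substSeries_eq_subst fun i => by
      rw [hfu i]
      simp [(hford i).ne']
  have hPB : ∀ i, MvPowerSeries.subst f (P i) = MvPowerSeries.subst f
      ((MvPolynomial.monomial (α i) (1 : K) - MvPolynomial.monomial (β i) 1 :
        MvPolynomial (Fin s) K) : MvPowerSeries (Fin s) K) := fun i => by
    rw [← congrFun hψ, hP, MvPolynomial.coe_sub, MvPolynomial.coe_monomial,
      MvPolynomial.coe_monomial, MvPowerSeries.subst_sub hsubst,
      MvPowerSeries.subst_monomial hsubst, MvPowerSeries.subst_monomial hsubst]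
    simp [Finsupp.prod_fintype]
  have hPw : ∀ i, (weight w (α i) : ℕ∞) < (P i).weightedOrder w := fun i =>
    MvPowerSeries.lt_weightedOrder_of_forall_coeff_ne_zero fun θ hθ => by
      simpa [Finsupp.weight_eq_sum, w] using hPweight i θ hθ
  rw [hf] at hPB
  rw [hψ, hf]
  simpa [MvPolynomial.coe_sub] using MvPowerSeries.setOf_subst_eq_zero_eq_span hw hu
    (fun i => MvPolynomial.isWeightedHomogeneous_monomial_sub_monomial_of_mem_ker
      (hker ▸ Ideal.subset_span ⟨i, rfl⟩)) hker.le hPw hPB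

/-- If `{f₁,…,f_s}` is a basis of `R = K⟦f₁,…,f_s⟧`, the kernel of the substitution
homomorphism `ψ : K⟦X₁,…,X_s⟧ → K⟦x⟧`, `Xᵢ ↦ fᵢ`, is generated by the elements
`Gᵢ = Fᵢ − Pᵢ`, where `F₁,…,F_r` are binomials generating the kernel of
`φ : K[X₁,…,X_s] → K[x]`, `Xᵢ ↦ x^{o(fᵢ)}`, `Sᵢ = ψ(Fᵢ)`, and `Pᵢ` is an expression of
`Sᵢ` in `f₁,…,f_s` all of whose monomials have weight `> pᵢ`. -/
theorem stmt_10 (K : Type*) [Field K] {s r : ℕ} (f : Fin s → PowerSeries K)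
    (hf0 : ∀ i, f i ≠ 0) (hford : ∀ i, 0 < ord K (f i))
    (hmonic : ∀ i, coeff (ord K (f i)) (f i) = 1)
    (hlen : FiniteLengthQuot K (seriesAlgebra f))
    (hbasis : oSet K (seriesAlgebra f)
        = ↑(AddSubmonoid.closure (Set.range fun j => ord K (f j))))
    (α β : Fin r → (Fin s →₀ ℕ))
    (hker : RingHom.ker (MvPolynomial.aeval fun i => (Polynomial.X : Polynomial K) ^ ord K (f i))
      = Ideal.span (Set.range fun i =>
          (MvPolynomial.monomial (α i) (1 : K) - MvPolynomial.monomial (β i) (1 : K))))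
    (P : Fin r → MvPowerSeries (Fin s) K)
    (hP : ∀ i, substSeries f (P i) = (∏ j, f j ^ (α i) j) - (∏ j, f j ^ (β i) j))
    (hPweight : ∀ i, ∀ θ : Fin s →₀ ℕ, MvPowerSeries.coeff θ (P i) ≠ 0 →
      (∑ j, (α i) j * ord K (f j)) < ∑ j, θ j * ord K (f j)) :
    {Q : MvPowerSeries (Fin s) K | substSeries f Q = 0}
      = ↑(Ideal.span (Set.range fun i =>
          ((MvPowerSeries.monomial (α i)) (1 : K)
            - (MvPowerSeries.monomial (β i)) (1 : K) - P i))) :=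
  stmt_10_general K f hford hmonic α β hker P hP hPweight
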